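/- Let $x,y,z \in W$ with $x*y=z$, where $*$ is the Demazure product, and set $y' = x^{-1}z$. Then $y' \le_L z$, $\ell(z) = \ell(x) + \ell(y')$, and $y' \le y$ in the Bruhat order. -/

import Mathlib

namespace PaperStmt

open scoped Classical

variable {B : Type*} {W : Type*} [Group W] {M : CoxeterMatrix B}

/-- Bruhat (strong) cover: `v = t * u` for a reflection `t`, with `ℓ v = ℓ u + 1`. -/
def BruhatCov (cs : CoxeterSystem M W) (u v : W) : Prop :=
  cs.length v = cs.length u + 1 ∧ ∃ t : W, cs.IsReflection t ∧ v = t * u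

/-- The Bruhat (strong) order, generated by the covering relations. -/
def BruhatLe (cs : CoxeterSystem M W) : W → W → Prop :=
  Relation.ReflTransGen (BruhatCov cs)

/-- Strict Bruhat order. -/
def BruhatLt (cs : CoxeterSystem M W) (u v : W) : Prop :=
  BruhatLe cs u v ∧ u ≠ v

/-- Left weak order: `u ≤_L v` iff `ℓ(v u⁻¹) + ℓ u = ℓ v`. -/
def leftLe (cs : CoxeterSystem M W) (u v : W) : Prop :=
  cs.length (v * u⁻¹) + cs.length u = cs.length v

/-- Right weak order: `u ≤_R v` iff `ℓ u + ℓ(u⁻¹ v) = ℓ v`. -/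
def rightLe (cs : CoxeterSystem M W) (u v : W) : Prop :=
  cs.length u + cs.length (u⁻¹ * v) = cs.length v

/-- Demazure action of a simple reflection: `φ_s(x) = s x` if `s x > x`, else `x`. -/
noncomputable def phi (cs : CoxeterSystem M W) (i : B) (x : W) : W :=
  if BruhatLt cs x (cs.simple i * x) then cs.simple i * x else x

/-- Anti-Demazure action: `ψ_s(x) = s x` if `s x < x`, else `x`. -/
noncomputable def psi (cs : CoxeterSystem M W) (i : B) (x : W) : W :=
  if BruhatLt cs (cs.simple i * x) x then cs.simple i * x else x

/-- Right anti-Demazure action: `ψ^R_s(x) = x s` if `x s < x`, else `x`. -/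
noncomputable def psiR (cs : CoxeterSystem M W) (i : B) (x : W) : W :=
  if BruhatLt cs (x * cs.simple i) x then x * cs.simple i else x

/-- `φ_w` along a word `w = s_1 ⋯ s_n`: `φ_{s_1} ∘ ⋯ ∘ φ_{s_n}`. -/
noncomputable def phiWord (cs : CoxeterSystem M W) (ω : List B) (x : W) : W :=
  ω.foldr (phi cs) x

/-- `ψ_w` along a word `w = s_1 ⋯ s_n`: `ψ_{s_1} ∘ ⋯ ∘ ψ_{s_n}`. -/
noncomputable def psiWord (cs : CoxeterSystem M W) (ω : List B) (x : W) : W :=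
  ω.foldr (psi cs) x

/-- `ψ^R_w` along a word `w = s_1 ⋯ s_n`: `ψ^R_{s_n} ∘ ⋯ ∘ ψ^R_{s_1}`. -/
noncomputable def psiRWord (cs : CoxeterSystem M W) (ω : List B) (x : W) : W :=
  ω.foldl (fun y i => psiR cs i y) x

/-!
Write `x = s_i u` with `ℓ x = ℓ u + 1`, and assume inductively that `φ_u(y) = u c` with lengths
adding and `c ≤ y`. If `s_i` lengthens `u c`, then `z = s_i u c` and `c` is unchanged. Otherwise,
by the exchange property, `s_i u c = u t c` for a reflection `t` with `ℓ(t c) = ℓ c - 1`, so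
`z = u c = (s_i u)(t c)` with lengths adding and `t c ≤ c ≤ y`.

The exchange property comes from Tits' sign representation of `W` on `W × ℤˣ`, in which `s_i`
conjugates the first coordinate and flips the sign exactly at `s_i`: it shows that the parity
of the number of occurrences of `t` in the right inversion sequence of a word depends only on
the product of the word.
-/

open List

section SignRepresentation

variable (cs : CoxeterSystem M W)

lemma simple_mul_mul_simple_eq_simple_iff (i : B) (t : W) :
    cs.simple i * t * cs.simple i = cs.simple i ↔ t = cs.simple i := by
  constructor
  · intro h
    simpa [mul_assoc] using congrArg (fun w => cs.simple i * w * cs.simple i) h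
  · rintro rfl
    simp

noncomputable def simpleSignPerm (i : B) : Equiv.Perm (W × ℤˣ) :=
  Function.Involutive.toPerm
    (fun p => (cs.simple i * p.1 * cs.simple i, if p.1 = cs.simple i then -p.2 else p.2))
    (by
      rintro ⟨t, ε⟩
      ext
      · simp [mul_assoc]
      · simp only [simple_mul_mul_simple_eq_simple_iff]
        split_ifs <;> simp)

lemma simpleSignPerm_apply (i : B) (t : W) (ε : ℤˣ) :
    simpleSignPerm cs i (t, ε) =
      (cs.simple i * t * cs.simple i, if t = cs.simple i then -ε else ε) := rfl

lemma prod_map_simpleSignPerm_apply (ω : List B) (t : W) (ε : ℤˣ) :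
    (ω.map (simpleSignPerm cs)).prod (t, ε) =
      (cs.wordProd ω * t * (cs.wordProd ω)⁻¹, (-1) ^ (cs.rightInvSeq ω).count t * ε) := by
  induction ω with
  | nil => simp
  | cons i ω ih =>
    have hconj : cs.wordProd ω * t * (cs.wordProd ω)⁻¹ = cs.simple i ↔
        t = (cs.wordProd ω)⁻¹ * cs.simple i * cs.wordProd ω := by
      constructor
      · intro h
        rw [← h]
        group
      · rintro rfl
        group
    rw [map_cons, prod_cons, Equiv.Perm.mul_apply, ih, simpleSignPerm_apply, hconj]
    ext
    · simp [cs.wordProd_cons, mul_assoc]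
    · by_cases h : t = (cs.wordProd ω)⁻¹ * cs.simple i * cs.wordProd ω
      · simp [CoxeterSystem.rightInvSeq, h, pow_succ]
      · simp [CoxeterSystem.rightInvSeq, h, Ne.symm h]

def pairWord (i j : B) : ℕ → List B
  | 0 => []
  | m + 1 => i :: j :: pairWord i j m

lemma prod_map_pairWord {G : Type*} [Monoid G] (f : B → G) (i j : B) (m : ℕ) :
    ((pairWord i j m).map f).prod = (f i * f j) ^ m := by
  induction m with
  | zero => simp [pairWord]
  | succ m ih => rw [pairWord, map_cons, map_cons, prod_cons, prod_cons, ih, pow_succ', mul_assoc]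

lemma wordProd_pairWord (i j : B) (m : ℕ) :
    cs.wordProd (pairWord i j m) = (cs.simple i * cs.simple j) ^ m :=
  prod_map_pairWord cs.simple i j m

lemma inv_pow_mul_simple (i j : B) (a : ℕ) :
    ((cs.simple i * cs.simple j) ^ a)⁻¹ * cs.simple j =
      cs.simple j * (cs.simple i * cs.simple j) ^ a := by
  have hconj : cs.simple j * (cs.simple i * cs.simple j) * (cs.simple j)⁻¹ =
      (cs.simple i * cs.simple j)⁻¹ := by
    simp [mul_assoc]
  rw [← inv_pow, ← hconj, conj_pow, cs.inv_simple]
  simp [mul_assoc]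

lemma rightInvSeq_pairWord (i j : B) (m : ℕ) :
    cs.rightInvSeq (pairWord i j m) =
      (range (2 * m)).reverse.map (fun b => cs.simple j * (cs.simple i * cs.simple j) ^ b) := by
  induction m with
  | zero => simp [pairWord]
  | succ m ih =>
    set r := cs.simple i * cs.simple j
    rw [show 2 * (m + 1) = 2 * m + 1 + 1 by ring, range_succ, range_succ]
    simp only [pairWord, CoxeterSystem.rightInvSeq, cs.wordProd_cons, wordProd_pairWord, ih,
      reverse_append, reverse_singleton, map_cons, cons_append, nil_append, cons.injEq, and_true]
    refine ⟨?_, ?_⟩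
    · calc (cs.simple j * r ^ m)⁻¹ * cs.simple i * (cs.simple j * r ^ m)
          _ = (r ^ m)⁻¹ * cs.simple j * r * r ^ m := by simp [r, mul_assoc]
          _ = cs.simple j * r ^ (2 * m + 1) := by
            rw [inv_pow_mul_simple, mul_assoc, mul_assoc, ← pow_succ', ← pow_add, two_mul,
              add_assoc]
    · rw [inv_pow_mul_simple, mul_assoc, ← pow_add, two_mul]

lemma even_count_rightInvSeq_pairWord (i j : B) {m : ℕ}
    (hm : (cs.simple i * cs.simple j) ^ m = 1) (t : W) :
    Even ((cs.rightInvSeq (pairWord i j m)).count t) := by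
  rw [rightInvSeq_pairWord, map_reverse, count_reverse, two_mul, range_add, map_append,
    count_append, map_map]
  have hperiodic : ((fun b => cs.simple j * (cs.simple i * cs.simple j) ^ b) ∘ (m + ·)) =
      fun b => cs.simple j * (cs.simple i * cs.simple j) ^ b := by
    ext b
    simp [pow_add, hm]
  rw [hperiodic]
  exact ⟨_, rfl⟩

lemma simpleSignPerm_isLiftable : M.IsLiftable (simpleSignPerm cs) := by
  intro i j
  rw [← prod_map_pairWord]
  ext ⟨t, ε⟩ : 1
  have hpow := cs.simple_mul_simple_pow i j
  rw [prod_map_simpleSignPerm_apply, wordProd_pairWord, hpow,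
    (even_count_rightInvSeq_pairWord cs i j hpow t).neg_one_pow]
  simp

noncomputable def signRep : W →* Equiv.Perm (W × ℤˣ) :=
  cs.lift ⟨simpleSignPerm cs, simpleSignPerm_isLiftable cs⟩

lemma signRep_wordProd (ω : List B) :
    signRep cs (cs.wordProd ω) = (ω.map (simpleSignPerm cs)).prod := by
  rw [CoxeterSystem.wordProd, map_list_prod, map_map]
  exact congrArg prod (map_congr_left fun i _ => cs.lift_apply_simple _ i)

theorem neg_one_pow_count_rightInvSeq_eq {ω ω' : List B} (h : cs.wordProd ω = cs.wordProd ω')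
    (t : W) :
    (-1 : ℤˣ) ^ (cs.rightInvSeq ω).count t = (-1) ^ (cs.rightInvSeq ω').count t := by
  simpa [signRep_wordProd, prod_map_simpleSignPerm_apply] using
    congrArg (fun f => (f (t, 1)).2) (congrArg (signRep cs) h)

end SignRepresentation

section Exchange

variable (cs : CoxeterSystem M W)

theorem simple_mem_rightInvSeq_of_isRightDescent {ω : List B} {i : B}
    (hi : cs.IsRightDescent (cs.wordProd ω) i) : cs.simple i ∈ cs.rightInvSeq ω := by
  obtain ⟨τ, hτ, hτω⟩ := cs.exists_isReduced (cs.wordProd ω * cs.simple i)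
  have hprod : cs.wordProd (τ.concat i) = cs.wordProd ω := by
    rw [cs.wordProd_concat, ← hτω, cs.simple_mul_simple_cancel_right]
  have hτi : cs.simple i ∉ cs.rightInvSeq τ := fun hmem => by
    have := (cs.isRightInversion_of_mem_rightInvSeq hτ hmem).2
    rw [← hτω, cs.simple_mul_simple_cancel_right] at this
    exact lt_asymm this hi
  have hcount : (cs.rightInvSeq (τ.concat i)).count (cs.simple i) = 1 := by
    have hconj : ((cs.rightInvSeq τ).map (MulAut.conj (cs.simple i))).count (cs.simple i) =
        (cs.rightInvSeq τ).count (cs.simple i) := by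
      simpa using count_map_of_injective (cs.rightInvSeq τ) _
        (MulAut.conj (cs.simple i)).injective (cs.simple i)
    rw [cs.rightInvSeq_concat, concat_eq_append, count_append, hconj, count_eq_zero.mpr hτi]
    simp
  by_contra hωi
  have := neg_one_pow_count_rightInvSeq_eq cs hprod (cs.simple i)
  rw [hcount, count_eq_zero.mpr hωi] at this
  simp at this

theorem simple_mem_leftInvSeq_of_isLeftDescent {ω : List B} {i : B}
    (hi : cs.IsLeftDescent (cs.wordProd ω) i) : cs.simple i ∈ cs.leftInvSeq ω := by
  have hrev : cs.IsRightDescent (cs.wordProd ω.reverse) i := by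
    rwa [cs.wordProd_reverse, cs.isRightDescent_inv_iff]
  simpa [cs.rightInvSeq_reverse] using
    simple_mem_rightInvSeq_of_isRightDescent cs hrev

lemma leftInvSeq_append (α γ : List B) :
    cs.leftInvSeq (α ++ γ) =
      cs.leftInvSeq α ++ (cs.leftInvSeq γ).map (MulAut.conj (cs.wordProd α)) := by
  induction α with
  | nil => simp
  | cons a α ih =>
    simp only [cons_append, CoxeterSystem.leftInvSeq, ih, map_append, map_map, cs.wordProd_cons,
      map_mul]
    rfl

theorem exists_isReflection_simple_mul_mul_eq {u c : W} {i : B} (hu : ¬cs.IsLeftDescent u i)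
    (huc : cs.length (u * c) = cs.length u + cs.length c) (hi : cs.IsLeftDescent (u * c) i) :
    ∃ t : W, cs.IsReflection t ∧ cs.simple i * (u * c) = u * (t * c) ∧
      cs.length (t * c) + 1 = cs.length c := by
  obtain ⟨α, hα, rfl⟩ := cs.exists_isReduced u
  obtain ⟨γ, hγ, rfl⟩ := cs.exists_isReduced c
  have hmem := simple_mem_leftInvSeq_of_isLeftDescent cs
    (by rwa [cs.wordProd_append] : cs.IsLeftDescent (cs.wordProd (α ++ γ)) i)
  rw [leftInvSeq_append, mem_append] at hmem
  rcases hmem with hmem | hmem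
  · exact absurd (cs.isLeftInversion_of_mem_leftInvSeq hα hmem).2 hu
  obtain ⟨t, htγ, hti⟩ := mem_map.mp hmem
  rw [cs.isLeftDescent_iff, ← hti] at hi
  rw [← hti]
  have hswap : MulAut.conj (cs.wordProd α) t * (cs.wordProd α * cs.wordProd γ) =
      cs.wordProd α * (t * cs.wordProd γ) := by
    simp [MulAut.conj_apply, mul_assoc]
  have htc : cs.length (t * cs.wordProd γ) < cs.length (cs.wordProd γ) :=
    (cs.isLeftInversion_of_mem_leftInvSeq hγ htγ).2
  refine ⟨t, cs.isReflection_of_mem_leftInvSeq γ htγ, hswap, ?_⟩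
  rw [hswap] at hi
  have := cs.length_mul_le (cs.wordProd α) (t * cs.wordProd γ)
  omega

end Exchange

section Demazure

variable {cs : CoxeterSystem M W}

lemma BruhatLe.length_le {u v : W} (h : BruhatLe cs u v) : cs.length u ≤ cs.length v := by
  induction h with
  | refl => exact le_rfl
  | tail _ hcov ih => exact ih.trans (hcov.1 ▸ Nat.le_succ _)

lemma bruhatLt_simple_mul_iff {x : W} {i : B} :
    BruhatLt cs x (cs.simple i * x) ↔ ¬cs.IsLeftDescent x i := by
  rw [cs.not_isLeftDescent_iff]
  constructor
  · rintro ⟨hle, hne⟩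
    refine (cs.length_simple_mul x i).resolve_right fun hlt => ?_
    have := hle.length_le
    omega
  · intro h
    refine ⟨.single ⟨h, cs.simple i, cs.isReflection_simple i, rfl⟩, fun he => ?_⟩
    rw [← he] at h
    omega

lemma phi_eq_ite (i : B) (x : W) :
    phi cs i x = if cs.IsLeftDescent x i then x else cs.simple i * x := by
  by_cases h : cs.IsLeftDescent x i <;> simp [phi, bruhatLt_simple_mul_iff, h]

theorem length_phi_mul_and_bruhatLe {u c : W} {i : B} (hu : ¬cs.IsLeftDescent u i)
    (huc : cs.length (u * c) = cs.length u + cs.length c) :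
    cs.length (phi cs i (u * c)) =
        cs.length (cs.simple i * u) + cs.length ((cs.simple i * u)⁻¹ * phi cs i (u * c)) ∧
      BruhatLe cs ((cs.simple i * u)⁻¹ * phi cs i (u * c)) c := by
  have hsu := cs.not_isLeftDescent_iff.mp hu
  have hinv : (cs.simple i * u)⁻¹ = u⁻¹ * cs.simple i := by simp
  rw [phi_eq_ite, hinv]
  split_ifs with hi
  · obtain ⟨t, ht, hswap, htc⟩ := exists_isReflection_simple_mul_mul_eq cs hu huc hi
    rw [mul_assoc, hswap, inv_mul_cancel_left]
    refine ⟨by omega, .single ⟨htc.symm, t, ht, ?_⟩⟩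
    rw [← mul_assoc, ht.mul_self, one_mul]
  · rw [mul_assoc, cs.simple_mul_simple_cancel_left, inv_mul_cancel_left]
    refine ⟨?_, .refl⟩
    rw [cs.not_isLeftDescent_iff.mp hi]
    omega

theorem length_phiWord_and_bruhatLe {ω : List B} (hω : cs.IsReduced ω) (y : W) :
    cs.length (phiWord cs ω y) =
        cs.length (cs.wordProd ω) + cs.length ((cs.wordProd ω)⁻¹ * phiWord cs ω y) ∧
      BruhatLe cs ((cs.wordProd ω)⁻¹ * phiWord cs ω y) y := by
  induction ω with
  | nil => exact ⟨by simp, by simpa [phiWord] using .refl⟩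
  | cons i ω ih =>
    have hω' : cs.IsReduced ω := by simpa using hω.drop 1
    have hu : ¬cs.IsLeftDescent (cs.wordProd ω) i := by
      rw [cs.not_isLeftDescent_iff, ← cs.wordProd_cons, hω.eq, hω'.eq, length_cons]
    obtain ⟨hlen, hle⟩ := ih hω'
    have hsplit : cs.wordProd ω * ((cs.wordProd ω)⁻¹ * phiWord cs ω y) = phiWord cs ω y :=
      mul_inv_cancel_left _ _
    have step := length_phi_mul_and_bruhatLe (c := (cs.wordProd ω)⁻¹ * phiWord cs ω y) hu
      (by rw [hsplit]; exact hlen)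
    rw [hsplit] at step
    exact ⟨step.1, step.2.trans hle⟩

lemma leftLe_inv_mul {x z : W} (h : cs.length z = cs.length x + cs.length (x⁻¹ * z)) :
    leftLe cs (x⁻¹ * z) z := by
  rw [leftLe, mul_inv_rev, inv_inv, mul_inv_cancel_left]
  exact h.symm

end Demazure

/-- If `x * y = z` in the Demazure product (i.e. `z = φ_x(y)`, computed along any
reduced word `ω` for `x`), and `y' = x⁻¹ z`, then `y' ≤_L z`, `ℓ z = ℓ x + ℓ y'`,
and `y' ≤ y` in the Bruhat order. -/
theorem stmt12 (cs : CoxeterSystem M W) (x y z : W) (ω : List B)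
    (hred : cs.IsReduced ω) (hω : cs.wordProd ω = x)
    (hz : phiWord cs ω y = z) :
    leftLe cs (x⁻¹ * z) z ∧
      cs.length z = cs.length x + cs.length (x⁻¹ * z) ∧
      BruhatLe cs (x⁻¹ * z) y := by
  subst hω hz
  obtain ⟨hlen, hle⟩ := length_phiWord_and_bruhatLe hred y
  exact ⟨leftLe_inv_mul hlen, hlen, hle⟩
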